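/- arXiv:2206.01614 — 5 statements merged into one kernel-verified Lean document; each statement's English description precedes it below -/
import Mathlib

section
/- Let B and h be definite programs in a first-order language without equality such that no predicate symbol occurring in the head of a rule of h occurs in the body of a rule of h, and such that no predicate symbol occurring in the body of a rule of B occurs in the head of a rule of h (BK independence). Then for every ground atom e: B ∪ h ⊨ e if and only if B ⊨ e or B ∪ {r} ⊨ e for some single rule r ∈ h. (The logical consequences of B ∪ h among ground atoms are the union of the consequences of B ∪ {r} over the rules r of h.) -/
/- A framework for definite logic programs (terms are variables or constants),
with Herbrand-interpretation semantics: for a definite theory, classical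
first-order entailment of a ground atom coincides with truth in every
(Herbrand) model. -/

variable {V C P : Type}

/-- A term is a variable or a constant. -/
inductive Term (V C : Type) where
  | var : V → Term V C
  | const : C → Term V C

/-- An atom: a predicate symbol applied to a list of terms. -/
structure Atom (V C P : Type) where
  pred : P
  args : List (Term V C)

/-- A definite clause (rule): a head atom and a list of body atoms,
read as ∀x̄ (B₁ ∧ … ∧ Bₙ → A). -/
structure Rule (V C P : Type) where
  head : Atom V C P
  body : List (Atom V C P)

noncomputable instance : DecidableEq (Rule V C P) := Classical.decEq _

/-- A ground atom: a predicate symbol applied to constants. -/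
structure GroundAtom (C P : Type) where
  pred : P
  args : List C

/-- A (definite) program is a finite set of definite clauses. -/
abbrev Program (V C P : Type) := Finset (Rule V C P)

/-- Applying a substitution to a term. -/
def Term.subst (θ : V → Term V C) : Term V C → Term V C
  | .var v => θ v
  | .const c => .const c

/-- Applying a substitution to an atom. -/
def Atom.subst (θ : V → Term V C) (a : Atom V C P) : Atom V C P :=
  ⟨a.pred, a.args.map (Term.subst θ)⟩

/-- Grounding a term by assigning constants to variables. -/
def Term.groundWith (g : V → C) : Term V C → C
  | .var v => g v
  | .const c => c

/-- Grounding an atom. -/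
def Atom.groundWith (g : V → C) (a : Atom V C P) : GroundAtom C P :=
  ⟨a.pred, a.args.map (Term.groundWith g)⟩

/-- A (Herbrand) interpretation: a set of ground atoms. -/
abbrev Interp (C P : Type) := Set (GroundAtom C P)

/-- A rule holds in an interpretation if every ground instance whose body
atoms are all true has a true head. -/
def Rule.holds (I : Interp C P) (r : Rule V C P) : Prop :=
  ∀ g : V → C, (∀ b ∈ r.body, Atom.groundWith g b ∈ I) → Atom.groundWith g r.head ∈ I

/-- An interpretation is a model of a program if all its rules hold in it. -/
def Program.isModel (I : Interp C P) (T : Program V C P) : Prop :=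
  ∀ r ∈ T, Rule.holds I r

/-- Entailment of a ground atom by a definite program: truth in every
(Herbrand) model.  For definite theories this coincides with classical
first-order entailment of a ground atom. -/
def Entails (T : Program V C P) (e : GroundAtom C P) : Prop :=
  ∀ I : Interp C P, Program.isModel I T → e ∈ I

/-- The predicate symbols occurring in the head of a rule of `h`. -/
def Program.headPreds (h : Program V C P) : Set P :=
  { p | ∃ r ∈ h, r.head.pred = p }

/-- The predicate symbols occurring in the body of a rule of `h`. -/
def Program.bodyPreds (h : Program V C P) : Set P :=
  { p | ∃ r ∈ h, ∃ a ∈ r.body, a.pred = p }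

/-- A program is separable when (i) it has at least two rules and (ii) no
predicate symbol in the head of one of its rules also appears in the body
of one of its rules. -/
def Program.Separable (h : Program V C P) : Prop :=
  2 ≤ h.card ∧ ∀ p ∈ Program.headPreds h, p ∉ Program.bodyPreds h

/-- The number of literals in a rule: its head plus its body literals. -/
def Rule.size (r : Rule V C P) : ℕ := 1 + r.body.length

/-- The size of a program: total number of literals occurring in its rules. -/
def Program.size (h : Program V C P) : ℕ := ∑ r ∈ h, Rule.size r

/-- BK independence: no predicate symbol occurring in the body of a rule of
the background knowledge `B` occurs in the head of a rule of `h`. -/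
def BKIndep (B h : Program V C P) : Prop :=
  ∀ p ∈ Program.bodyPreds B, p ∉ Program.headPreds h

/-- `h` is complete: `B ∪ h ⊨ e` for every positive example `e`. -/
def Complete (B h : Program V C P) (Epos : Finset (GroundAtom C P)) : Prop :=
  ∀ e ∈ Epos, Entails (B ∪ h) e

/-- `h` is consistent: `B ∪ h ⊭ e` for every negative example `e`. -/
def Consistent (B h : Program V C P) (Eneg : Finset (GroundAtom C P)) : Prop :=
  ∀ e ∈ Eneg, ¬ Entails (B ∪ h) e

/-- `h` is partially complete: `B ∪ h ⊨ e` for some positive example `e`. -/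
def PartiallyComplete (B h : Program V C P) (Epos : Finset (GroundAtom C P)) : Prop :=
  ∃ e ∈ Epos, Entails (B ∪ h) e

/-- `h` is totally incomplete: `B ∪ h ⊭ e` for every positive example `e`. -/
def TotallyIncomplete (B h : Program V C P) (Epos : Finset (GroundAtom C P)) : Prop :=
  ∀ e ∈ Epos, ¬ Entails (B ∪ h) e

/-- A solution is a complete and consistent program. -/
def Solution (B h : Program V C P) (Epos Eneg : Finset (GroundAtom C P)) : Prop :=
  Complete B h Epos ∧ Consistent B h Eneg

/-- A promising program is a partially complete and consistent program. -/
def Promising (B h : Program V C P) (Epos Eneg : Finset (GroundAtom C P)) : Prop :=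
  PartiallyComplete B h Epos ∧ Consistent B h Eneg

/-- An optimal solution: a solution of minimal size among all solutions. -/
def OptimalSolution (B h : Program V C P) (Epos Eneg : Finset (GroundAtom C P)) : Prop :=
  Solution B h Epos Eneg ∧
    ∀ h' : Program V C P, Solution B h' Epos Eneg → Program.size h ≤ Program.size h'

/-- Clause `r₁` subsumes clause `r₂`: some substitution maps the head of `r₁`
to the head of `r₂` and every body literal of `r₁` to a body literal of `r₂`
(i.e. `r₁θ ⊆ r₂` viewing definite clauses as sets of literals). -/
def Rule.Subsumes (r₁ r₂ : Rule V C P) : Prop :=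
  ∃ θ : V → Term V C, Atom.subst θ r₁.head = r₂.head ∧
    ∀ b ∈ r₁.body, Atom.subst θ b ∈ r₂.body

/-- `h₁` subsumes `h₂` (`h₁ ⪯ h₂`): every clause of `h₂` is subsumed by some
clause of `h₁`.  `h₂` is a specialisation of `h₁`, and `h₁` a generalisation
of `h₂`. -/
def Program.Subsumes (h₁ h₂ : Program V C P) : Prop :=
  ∀ r₂ ∈ h₂, ∃ r₁ ∈ h₁, Rule.Subsumes r₁ r₂


/-- Entailment is monotone in the program. -/
private lemma entails_mono {V C P : Type} {T₁ T₂ : Program V C P}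
    (hsub : T₁ ⊆ T₂) {a : GroundAtom C P} (ha : Entails T₁ a) : Entails T₂ a := by
  intro I hI
  exact ha I (fun r hr => hI r (hsub hr))

/-- Key lemma: a consequence of `B ∪ {r'}` whose predicate is not a head
predicate of `h` is already a consequence of `B`. -/
private lemma entails_of_entails_single {V C P : Type}
    (B h : Program V C P) (hBK : BKIndep B h) {r' : Rule V C P} (hr' : r' ∈ h)
    {a : GroundAtom C P} (ha : Entails (B ∪ ({r'} : Program V C P)) a)
    (hpred : a.pred ∉ Program.headPreds h) : Entails B a := by
  -- consider the interpretation: consequences of B plus everything with a head predicate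
  set I₀ : Interp C P :=
    {x | Entails B x} ∪ {x | x.pred ∈ Program.headPreds h} with hI₀
  have hmodel : Program.isModel I₀ (B ∪ ({r'} : Program V C P)) := by
    intro s hs
    rcases Finset.mem_union.mp hs with hsB | hsr
    · intro g hbody
      left
      intro I hI
      have : ∀ b ∈ s.body, Atom.groundWith g b ∈ I := by
        intro b hb
        have hmem := hbody b hb
        rcases hmem with hEnt | hHead
        · exact hEnt I hI
        · exfalso
          have hbp : (Atom.groundWith g b).pred ∈ Program.bodyPreds B := ⟨s, hsB, b, hb, rfl⟩
          exact hBK _ hbp hHead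
      exact hI s hsB g this
    · have hsr' : s = r' := Finset.mem_singleton.mp hsr
      subst hsr'
      intro g _
      right
      exact ⟨s, hr', rfl⟩
  have := ha I₀ hmodel
  rcases this with hEnt | hHead
  · exact hEnt
  · exact absurd hHead hpred

/-- If no head predicate symbol of `h` occurs in the body of a rule
of `h`, and no body predicate symbol of `B` occurs in the head of a rule of `h`
(BK independence), then for every ground atom `e`: `B ∪ h ⊨ e` iff `B ⊨ e` or
`B ∪ {r} ⊨ e` for some single rule `r ∈ h`. -/
theorem entails_union_iff_entails_single_rule {V C P : Type}
    (B h : Program V C P)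
    (hnonrec : ∀ p ∈ Program.headPreds h, p ∉ Program.bodyPreds h)
    (hBK : BKIndep B h)
    (e : GroundAtom C P) :
    Entails (B ∪ h) e ↔
      (Entails B e ∨ ∃ r ∈ h, Entails (B ∪ ({r} : Program V C P)) e) := by
  constructor
  · intro HE
    by_contra hcon
    push_neg at hcon
    obtain ⟨hnB, hnr⟩ := hcon
    set M : Interp C P :=
      {a | Entails B a ∨ ∃ r ∈ h, Entails (B ∪ ({r} : Program V C P)) a} with hM
    have hmodel : Program.isModel M (B ∪ h) := by
      intro s hs
      rcases Finset.mem_union.mp hs with hsB | hsh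
      · intro g hbody
        have hbodyB : ∀ b ∈ s.body, Entails B (Atom.groundWith g b) := by
          intro b hb
          rcases hbody b hb with hEnt | ⟨r, hr, hEnt⟩
          · exact hEnt
          · apply entails_of_entails_single B h hBK hr hEnt
            intro hHead
            exact hBK (Atom.groundWith g b).pred ⟨s, hsB, b, hb, rfl⟩ hHead
        left
        intro I hI
        exact hI s hsB g (fun b hb => hbodyB b hb I hI)
      · intro g hbody
        have hbodyB : ∀ b ∈ s.body, Entails B (Atom.groundWith g b) := by
          intro b hb
          have hnotHead : (Atom.groundWith g b).pred ∉ Program.headPreds h := by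
            intro hHead
            exact hnonrec _ hHead ⟨s, hsh, b, hb, rfl⟩
          rcases hbody b hb with hEnt | ⟨r, hr, hEnt⟩
          · exact hEnt
          · exact entails_of_entails_single B h hBK hr hEnt hnotHead
        right
        refine ⟨s, hsh, ?_⟩
        intro I hI
        have hIB : Program.isModel I B := fun r hr =>
          hI r (Finset.mem_union.mpr (Or.inl hr))
        exact hI s (Finset.mem_union.mpr (Or.inr (Finset.mem_singleton.mpr rfl))) g
          (fun b hb => hbodyB b hb I hIB)
    rcases HE M hmodel with hEnt | ⟨r, hr, hEnt⟩
    · exact hnB hEnt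
    · exact hnr r hr hEnt
  · rintro (hB | ⟨r, hr, hBr⟩) I hI
    · exact hB I (fun s hs => hI s (Finset.mem_union.mpr (Or.inl hs)))
    · refine hBr I (fun s hs => ?_)
      rcases Finset.mem_union.mp hs with hsB | hsr
      · exact hI s (Finset.mem_union.mpr (Or.inl hsB))
      · have : s = r := Finset.mem_singleton.mp hsr
        subst this
        exact hI s (Finset.mem_union.mpr (Or.inr hr))
end

section
/- Let h₁ and h₂ be consistent non-separable programs such that h = h₁ ∪ h₂ is separable, and assume BK independence (no predicate symbol occurring in the body of a rule of the background knowledge B occurs in the head of a rule of h). Then h is consistent. -/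
/- A framework for definite logic programs (terms are variables or constants),
with Herbrand-interpretation semantics: for a definite theory, classical
first-order entailment of a ground atom coincides with truth in every
(Herbrand) model. -/

variable {V C P : Type}

/-- If `h₁` and `h₂` are consistent non-separable programs whose
union `h = h₁ ∪ h₂` is separable, and BK independence holds for `h`, then `h`
is consistent. -/
theorem union_of_consistent_nonseparable_is_consistent {V C P : Type}
    (B h₁ h₂ : Program V C P) (Eneg : Finset (GroundAtom C P))
    (hns₁ : ¬ Program.Separable h₁) (hns₂ : ¬ Program.Separable h₂)
    (hc₁ : Consistent B h₁ Eneg) (hc₂ : Consistent B h₂ Eneg)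
    (hsep : Program.Separable (h₁ ∪ h₂))
    (hBK : BKIndep B (h₁ ∪ h₂)) :
    Consistent B (h₁ ∪ h₂) Eneg := by
  intro e he hent
  have h1 := hc₁ e he
  have h2 := hc₂ e he
  simp only [Entails, not_forall] at h1 h2
  obtain ⟨I₁, hI₁, he₁⟩ := h1
  obtain ⟨I₂, hI₂, he₂⟩ := h2
  set J : Interp C P :=
    {a | (a ∈ I₁ ∧ a ∈ I₂) ∨ (a.pred ∈ Program.headPreds h₁ ∧ a ∈ I₁) ∨
         (a.pred ∈ Program.headPreds h₂ ∧ a ∈ I₂)} with hJ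
  -- an atom in J whose predicate is not a head predicate of h₁ ∪ h₂ is in both I₁ and I₂
  have hbody : ∀ a : GroundAtom C P, a.pred ∉ Program.headPreds (h₁ ∪ h₂) →
      a ∈ J → a ∈ I₁ ∧ a ∈ I₂ := by
    intro a hp haJ
    rcases haJ with h | ⟨hph, _⟩ | ⟨hph, _⟩
    · exact h
    · obtain ⟨r, hr, hrp⟩ := hph
      exact absurd ⟨r, Finset.mem_union_left _ hr, hrp⟩ hp
    · obtain ⟨r, hr, hrp⟩ := hph
      exact absurd ⟨r, Finset.mem_union_right _ hr, hrp⟩ hp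
  have hmodel : Program.isModel J (B ∪ (h₁ ∪ h₂)) := by
    intro r hr g hbodyJ
    rcases Finset.mem_union.mp hr with hrB | hrh
    · -- rule from B
      have hb1 : ∀ b ∈ r.body, Atom.groundWith g b ∈ I₁ ∧ Atom.groundWith g b ∈ I₂ := by
        intro b hb
        refine hbody _ (hBK b.pred ⟨r, hrB, b, hb, rfl⟩) (hbodyJ b hb)
      exact Or.inl ⟨hI₁ r (Finset.mem_union_left _ hrB) g (fun b hb => (hb1 b hb).1),
                    hI₂ r (Finset.mem_union_left _ hrB) g (fun b hb => (hb1 b hb).2)⟩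
    · -- rule from h₁ ∪ h₂
      have hb1 : ∀ b ∈ r.body, Atom.groundWith g b ∈ I₁ ∧ Atom.groundWith g b ∈ I₂ := by
        intro b hb
        have hnp : b.pred ∉ Program.headPreds (h₁ ∪ h₂) := by
          intro hph
          exact hsep.2 b.pred hph ⟨r, hrh, b, hb, rfl⟩
        exact hbody _ hnp (hbodyJ b hb)
      rcases Finset.mem_union.mp hrh with hr1 | hr2
      · exact Or.inr (Or.inl ⟨⟨r, hr1, rfl⟩,
          hI₁ r (Finset.mem_union_right _ hr1) g (fun b hb => (hb1 b hb).1)⟩)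
      · exact Or.inr (Or.inr ⟨⟨r, hr2, rfl⟩,
          hI₂ r (Finset.mem_union_right _ hr2) g (fun b hb => (hb1 b hb).2)⟩)
  have heJ := hent J hmodel
  rcases heJ with h | ⟨_, h⟩ | ⟨_, h⟩
  · exact he₁ h.1
  · exact he₁ h
  · exact he₂ h
end

section
/- Let h₁, …, hₙ be consistent definite programs such that in the union h = h₁ ∪ … ∪ hₙ no predicate symbol occurring in the head of a rule of h occurs in the body of a rule of h, and assume BK independence (no predicate symbol occurring in the body of a rule of the background knowledge B occurs in the head of a rule of h). Then h is consistent. (Hence every combination program without recursion or predicate invention formed in the combine stage from consistent programs is consistent.) -/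
/- A framework for definite logic programs (terms are variables or constants),
with Herbrand-interpretation semantics: for a definite theory, classical
first-order entailment of a ground atom coincides with truth in every
(Herbrand) model. -/

variable {V C P : Type}

/-- If `h₁, …, hₙ` are consistent definite programs such that in
the union `h = h₁ ∪ … ∪ hₙ` no head predicate symbol of `h` occurs in the body
of a rule of `h`, and BK independence holds for `h`, then `h` is consistent. -/
theorem union_of_consistent_is_consistent {V C P : Type}
    (B : Program V C P) (Eneg : Finset (GroundAtom C P))
    (n : ℕ) (hn : 1 ≤ n) (f : Fin n → Program V C P)
    (hcons : ∀ i, Consistent B (f i) Eneg)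
    (hnonrec : ∀ p ∈ Program.headPreds (Finset.univ.biUnion f),
        p ∉ Program.bodyPreds (Finset.univ.biUnion f))
    (hBK : BKIndep B (Finset.univ.biUnion f)) :
    Consistent B (Finset.univ.biUnion f) Eneg := by
  intro e he hent
  set h : Program V C P := Finset.univ.biUnion f with hh
  -- the set of consequences of B
  let M0 : Interp C P := {a | Entails B a}
  have hM0 : Program.isModel M0 B := by
    intro r hr g hb I hI
    exact hI r hr g (fun b hbb => hb b hbb I hI)
  -- candidate model excluding e
  let M : Interp C P := M0 ∪ {a | a.pred ∈ Program.headPreds h ∧ a ≠ e}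
  have hM : Program.isModel M (B ∪ h) := by
    intro r hr g hb
    rcases Finset.mem_union.mp hr with hrB | hrh
    · have hb' : ∀ b ∈ r.body, Atom.groundWith g b ∈ M0 := by
        intro b hbb
        rcases hb b hbb with h1 | h2
        · exact h1
        · exact absurd h2.1 (hBK b.pred ⟨r, hrB, b, hbb, rfl⟩)
      exact Or.inl (hM0 r hrB g hb')
    · obtain ⟨i, -, hri⟩ := Finset.mem_biUnion.mp hrh
      have hb' : ∀ b ∈ r.body, Entails B (Atom.groundWith g b) := by
        intro b hbb
        rcases hb b hbb with h1 | h2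
        · exact h1
        · exact absurd h2.1 (fun hp => hnonrec _ hp ⟨r, hrh, b, hbb, rfl⟩)
      by_cases hne : Atom.groundWith g r.head = e
      · exfalso
        apply hcons i e he
        intro I hI
        have hIB : Program.isModel I B := fun r' hr' =>
          hI r' (Finset.mem_union_left _ hr')
        have := hI r (Finset.mem_union_right _ hri) g
          (fun b hbb => hb' b hbb I hIB)
        rwa [hne] at this
      · exact Or.inr ⟨⟨r, hrh, rfl⟩, hne⟩
  rcases hent M hM with h1 | h2
  · apply hcons ⟨0, hn⟩ e he
    intro I hI
    exact h1 I (fun r' hr' => hI r' (Finset.mem_union_left _ hr'))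
  · exact h2.2 rfl
end

section
/- Assume BK independence (no predicate symbol occurring in the body of a rule of the background knowledge B occurs in the head of a rule of any program) and E⁺ ≠ ∅. Let h_o be an optimal solution, i.e., a solution of minimal size among all definite programs that are solutions. Then h_o = h₁ ∪ … ∪ hₙ where each hᵢ is a non-separable promising program. In particular, if h_o is separable then for every rule r ∈ h_o the singleton program {r} is promising (it covers at least one positive example and no negative example). -/
/- A framework for definite logic programs (terms are variables or constants),
with Herbrand-interpretation semantics: for a definite theory, classical
first-order entailment of a ground atom coincides with truth in every
(Herbrand) model. -/

variable {V C P : Type}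

lemma entails_mono_s4 {T T' : Program V C P} (h : T ⊆ T') {e : GroundAtom C P}
    (he : Entails T e) : Entails T' e :=
  fun I hI => he I (fun r hr => hI r (h hr))

lemma groundWith_pred (g : V → C) (a : Atom V C P) :
    (Atom.groundWith g a).pred = a.pred := rfl

/-- Key lemma: anything entailed by `B ∪ {s}` is either entailed by `B`
alone or has the head predicate of `s`. -/
lemma entails_singleton_cases (B ho : Program V C P) (hBK : BKIndep B ho)
    {s : Rule V C P} (hs : s ∈ ho) {a : GroundAtom C P}
    (ha : Entails (B ∪ {s}) a) : Entails B a ∨ a.pred = s.head.pred := by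
  by_contra hcon
  push_neg at hcon
  obtain ⟨h1, h2⟩ := hcon
  set S : Interp C P :=
    {x | Entails B x ∨ (Entails (B ∪ {s}) x ∧ x.pred = s.head.pred)} with hS
  have hmodel : Program.isModel S (B ∪ {s}) := by
    intro r hr
    rcases Finset.mem_union.mp hr with hrB | hrs
    · intro g hb
      have hbody : ∀ b ∈ r.body, Entails B (Atom.groundWith g b) := by
        intro b hbb
        have hbS := hb b hbb
        rcases hbS with hE | ⟨_, hp⟩
        · exact hE
        · exfalso
          have hpin : b.pred ∈ Program.bodyPreds B := ⟨r, hrB, b, hbb, rfl⟩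
          have : b.pred ∉ Program.headPreds ho := hBK b.pred hpin
          exact this (by rw [show b.pred = s.head.pred from hp]; exact ⟨s, hs, rfl⟩)
      left
      intro I hI
      exact hI r hrB g (fun b hbb => hbody b hbb I hI)
    · have hrs' : r = s := Finset.mem_singleton.mp hrs
      subst hrs'
      intro g hb
      have hbody : ∀ b ∈ r.body, Entails (B ∪ {r}) (Atom.groundWith g b) := by
        intro b hbb
        rcases hb b hbb with hE | ⟨hE, _⟩
        · exact entails_mono_s4 Finset.subset_union_left hE
        · exact hE
      right
      constructor
      · intro I hI
        exact hI r (Finset.mem_union_right _ (Finset.mem_singleton_self r)) g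
          (fun b hbb => hbody b hbb I hI)
      · exact groundWith_pred g r.head
  have := ha S hmodel
  rcases this with hE | ⟨_, hp⟩
  · exact h1 hE
  · exact h2 hp

/-- Decomposition lemma for separable programs: entailment from `B ∪ ho`
factors through a single rule. -/
lemma entails_decompose (B ho : Program V C P) (hBK : BKIndep B ho)
    (hsep : ∀ p ∈ Program.headPreds ho, p ∉ Program.bodyPreds ho)
    {r₀ : Rule V C P} (hr₀ : r₀ ∈ ho) {e : GroundAtom C P}
    (he : Entails (B ∪ ho) e) :
    ∃ s ∈ ho, Entails (B ∪ {s}) e := by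
  set U : Interp C P := {a | ∃ s ∈ ho, Entails (B ∪ {s}) a} with hU
  have hmodel : Program.isModel U (B ∪ ho) := by
    intro r hr
    rcases Finset.mem_union.mp hr with hrB | hrho
    · intro g hb
      have hbody : ∀ b ∈ r.body, Entails B (Atom.groundWith g b) := by
        intro b hbb
        obtain ⟨s, hs, hE⟩ := hb b hbb
        rcases entails_singleton_cases B ho hBK hs hE with h | h
        · exact h
        · exfalso
          have hpin : b.pred ∈ Program.bodyPreds B := ⟨r, hrB, b, hbb, rfl⟩
          exact hBK b.pred hpin (by
            rw [show b.pred = s.head.pred from h]; exact ⟨s, hs, rfl⟩)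
      refine ⟨r₀, hr₀, ?_⟩
      intro I hI
      exact hI r (Finset.mem_union_left _ hrB) g (fun b hbb => hbody b hbb I
        (fun t ht => hI t (Finset.mem_union_left _ ht)))
    · intro g hb
      have hbody : ∀ b ∈ r.body, Entails (B ∪ {r}) (Atom.groundWith g b) := by
        intro b hbb
        obtain ⟨s, hs, hE⟩ := hb b hbb
        rcases entails_singleton_cases B ho hBK hs hE with h | h
        · exact entails_mono_s4 Finset.subset_union_left h
        · exfalso
          have hhead : s.head.pred ∈ Program.headPreds ho := ⟨s, hs, rfl⟩
          have hbodyp : s.head.pred ∈ Program.bodyPreds ho := by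
            refine ⟨r, hrho, b, hbb, ?_⟩
            exact h
          exact hsep s.head.pred hhead hbodyp
      refine ⟨r, hrho, ?_⟩
      intro I hI
      exact hI r (Finset.mem_union_right _ (Finset.mem_singleton_self r)) g
        (fun b hbb => hbody b hbb I hI)
  exact he U hmodel

lemma size_erase_lt (ho : Program V C P) {r : Rule V C P} (hr : r ∈ ho) :
    Program.size (ho.erase r) < Program.size ho := by
  have h := Finset.sum_erase_add ho Rule.size hr
  have hpos : 0 < Rule.size r := by unfold Rule.size; omega
  simp only [Program.size]
  omega

/-- Under BK independence and `E⁺ ≠ ∅`, an optimal solution `h_o`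
is a union of non-separable promising programs; in particular, if `h_o` is
separable then for every rule `r ∈ h_o` the singleton program `{r}` is
promising. -/
theorem optimal_solution_is_union_of_nonseparable_promising {V C P : Type}
    (B ho : Program V C P) (Epos Eneg : Finset (GroundAtom C P))
    (hBK : BKIndep B ho) (hpos : Epos.Nonempty)
    (hopt : OptimalSolution B ho Epos Eneg) :
    (∃ (n : ℕ) (f : Fin n → Program V C P),
        (∀ i, ¬ Program.Separable (f i) ∧ Promising B (f i) Epos Eneg) ∧
        ho = Finset.univ.biUnion f) ∧
    (Program.Separable ho →
      ∀ r ∈ ho, Promising B ({r} : Program V C P) Epos Eneg) := by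
  obtain ⟨⟨hcomp, hcons⟩, hmin⟩ := hopt
  by_cases hsep : Program.Separable ho
  · -- separable case
    have key : ∀ r ∈ ho, Promising B ({r} : Program V C P) Epos Eneg := by
      intro r hr
      have hconsr : Consistent B ({r} : Program V C P) Eneg := by
        intro e heneg hE
        exact hcons e heneg (entails_mono_s4
          (Finset.union_subset_union_right (Finset.singleton_subset_iff.mpr hr)) hE)
      refine ⟨?_, hconsr⟩
      by_contra hnc
      simp only [PartiallyComplete, not_exists, not_and] at hnc
      have hsol : Solution B (ho.erase r) Epos Eneg := by
        constructor
        · intro e hepos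
          obtain ⟨s, hs, hEs⟩ :=
            entails_decompose B ho hBK hsep.2 hr (hcomp e hepos)
          have hsr : s ≠ r := by
            intro hsr; subst hsr; exact hnc e hepos hEs
          exact entails_mono_s4 (Finset.union_subset_union_right
            (Finset.singleton_subset_iff.mpr (Finset.mem_erase.mpr ⟨hsr, hs⟩))) hEs
        · intro e heneg hE
          exact hcons e heneg
            (entails_mono_s4 (Finset.union_subset_union_right (Finset.erase_subset r ho)) hE)
      exact absurd (hmin _ hsol) (Nat.not_le_of_lt (size_erase_lt ho hr))
    constructor
    · refine ⟨ho.card, fun i => {(ho.equivFin.symm i : Rule V C P)}, ?_, ?_⟩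
      · intro i
        constructor
        · intro ⟨h2, _⟩
          simp [Finset.card_singleton] at h2
        · exact key _ (ho.equivFin.symm i).2
      · ext a
        constructor
        · intro ha
          refine Finset.mem_biUnion.mpr ⟨ho.equivFin ⟨a, ha⟩, Finset.mem_univ _, ?_⟩
          simp
        · intro ha
          obtain ⟨i, _, hi⟩ := Finset.mem_biUnion.mp ha
          rw [Finset.mem_singleton.mp hi]
          exact (ho.equivFin.symm i).2
    · exact fun _ => key
  · -- non-separable case: take the single component ho itself
    constructor
    · refine ⟨1, fun _ => ho, ?_, ?_⟩
      · intro _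
        refine ⟨hsep, ?_, hcons⟩
        obtain ⟨e, he⟩ := hpos
        exact ⟨e, he, hcomp e he⟩
      · ext a
        simp
    · exact fun h => absurd h hsep
end

section
/- Let h₁ and h₂ be programs such that h₂ is a specialisation of h₁ (h₁ ⪯ h₂), size(h₁) < size(h₂), and h₁ is consistent. Then h₂ is not an optimal solution: if h₂ is a solution, then h₁ is a strictly smaller solution. -/
/- A framework for definite logic programs (terms are variables or constants),
with Herbrand-interpretation semantics: for a definite theory, classical
first-order entailment of a ground atom coincides with truth in every
(Herbrand) model. -/

variable {V C P : Type}

lemma groundWith_subst (g : V → C) (θ : V → Term V C) (a : Atom V C P) :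
    Atom.groundWith g (Atom.subst θ a) =
      Atom.groundWith (fun v => Term.groundWith g (θ v)) a := by
  unfold Atom.groundWith Atom.subst
  simp only [List.map_map]
  congr 1
  apply List.map_congr_left
  intro t _
  cases t <;> rfl

lemma holds_of_subsumes {I : Interp C P} {r₁ r₂ : Rule V C P}
    (h : Rule.Subsumes r₁ r₂) (h1 : Rule.holds I r₁) : Rule.holds I r₂ := by
  obtain ⟨θ, hhead, hbody⟩ := h
  intro g hb
  have := h1 (fun v => Term.groundWith g (θ v)) (fun b hbmem => by
    rw [← groundWith_subst]
    exact hb _ (hbody b hbmem))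
  rw [← groundWith_subst, hhead] at this
  exact this

lemma entails_mono_s7 {B h₁ h₂ : Program V C P} (hsub : Program.Subsumes h₁ h₂)
    {e : GroundAtom C P} (h : Entails (B ∪ h₂) e) : Entails (B ∪ h₁) e := by
  intro I hI
  apply h
  intro r hr
  rcases Finset.mem_union.mp hr with hr | hr
  · exact hI r (Finset.mem_union_left _ hr)
  · obtain ⟨r₁, hr₁, hs⟩ := hsub r hr
    exact holds_of_subsumes hs (hI r₁ (Finset.mem_union_right _ hr₁))

/-- If `h₂` is a specialisation of `h₁` (`h₁ ⪯ h₂`) with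
`size(h₁) < size(h₂)` and `h₁` is consistent, then `h₂` is not an optimal
solution: if `h₂` is a solution then `h₁` is a strictly smaller solution. -/
theorem specialisation_of_consistent_not_optimal {V C P : Type}
    (B h₁ h₂ : Program V C P) (Epos Eneg : Finset (GroundAtom C P))
    (hsub : Program.Subsumes h₁ h₂)
    (hsize : Program.size h₁ < Program.size h₂)
    (hcons : Consistent B h₁ Eneg) :
    (Solution B h₂ Epos Eneg →
      Solution B h₁ Epos Eneg ∧ Program.size h₁ < Program.size h₂) ∧
    ¬ OptimalSolution B h₂ Epos Eneg := by
  have key : Solution B h₂ Epos Eneg → Solution B h₁ Epos Eneg := by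
    rintro ⟨hc, _⟩
    exact ⟨fun e he => entails_mono_s7 hsub (hc e he), hcons⟩
  refine ⟨fun hs => ⟨key hs, hsize⟩, ?_⟩
  rintro ⟨hs, hopt⟩
  exact absurd (hopt h₁ (key hs)) (not_le.mpr hsize)
end
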